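/- arXiv:1705.07110 — 5 statements merged into one kernel-verified Lean document; each statement's English description precedes it below -/
import Mathlib

section
/- Let K/F be a Galois extension of number fields whose Galois group G is cyclic of order n with generator σ, and assume every nonzero prime ideal of O_F is unramified in O_K (i.e. every prime of O_K above it has ramification index 1). Suppose γ ∈ K^× satisfies σ(γ)/γ ∈ (K^×)^n. Then there exists a fractional ideal I of O_F such that the principal fractional ideal of O_F generated by Norm_{K/F}(γ) equals I^n. -/
/-!
Writing `σ γ = γ kⁿ` and iterating gives `σⁱ γ = γ cᵢⁿ`, so `N(γ) = ∏ σⁱ γ` is an `n`-th power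
`βⁿ` in `K`. Since `K/F` is unramified, the `v`-adic valuation of `x ∈ F` equals the `w`-adic
valuation of `x` for any prime `w` of `K` above `v`; hence every exponent in the factorisation of
`(N γ)` is `n` times the `w`-adic valuation of `β`, and `(N γ)` is the `n`-th power of the
fractional ideal with the exponents divided by `n`.
-/

open Finset IsDedekindDomain WithZero
open scoped nonZeroDivisors

theorem IsCyclic.prod_univ_eq_prod_range_pow {G M : Type*} [Group G] [Fintype G] [CommMonoid M]
    {σ : G} (hσ : ∀ τ : G, τ ∈ Subgroup.zpowers σ) (f : G → M) :
    ∏ τ, f τ = ∏ i ∈ range (Nat.card G), f (σ ^ i) := by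
  classical
  rw [← IsCyclic.image_range_card hσ, prod_image]
  intro i hi j hj hij
  rw [← orderOf_eq_card_of_forall_mem_zpowers hσ] at hi hj
  exact pow_injOn_Iio_orderOf (mem_range.mp hi) (mem_range.mp hj) hij

theorem AlgEquiv.pow_apply_eq_mul_prod_pow {R A : Type*} [CommSemiring R] [CommSemiring A]
    [Algebra R A] {σ : A ≃ₐ[R] A} {x k : A} {n : ℕ} (h : σ x = x * k ^ n) (i : ℕ) :
    (σ ^ i) x = x * (∏ j ∈ range i, (σ ^ j) k) ^ n := by
  induction i with
  | zero => simp
  | succ i ih =>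
    rw [pow_succ, AlgEquiv.mul_apply, h, map_mul, map_pow, ih, prod_range_succ, mul_pow, mul_assoc]

namespace Algebra

variable {K L : Type*} [Field K] [Field L] [Algebra K L] [FiniteDimensional K L] [IsGalois K L]
  {σ : L ≃ₐ[K] L}

theorem algebraMap_norm_eq_prod_range_pow (hσ : ∀ τ : L ≃ₐ[K] L, τ ∈ Subgroup.zpowers σ)
    (x : L) : algebraMap K L (norm K x) = ∏ i ∈ range (Nat.card (L ≃ₐ[K] L)), (σ ^ i) x := by
  rw [norm_eq_prod_automorphisms, IsCyclic.prod_univ_eq_prod_range_pow hσ fun τ => τ x]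

theorem exists_algebraMap_norm_eq_pow_of_apply_eq_mul_pow
    (hσ : ∀ τ : L ≃ₐ[K] L, τ ∈ Subgroup.zpowers σ) {x k : L}
    (h : σ x = x * k ^ Nat.card (L ≃ₐ[K] L)) :
    ∃ β : L, algebraMap K L (norm K x) = β ^ Nat.card (L ≃ₐ[K] L) := by
  refine ⟨x * ∏ i ∈ range (Nat.card (L ≃ₐ[K] L)), ∏ j ∈ range i, (σ ^ j) k, ?_⟩
  rw [algebraMap_norm_eq_prod_range_pow hσ,
    prod_congr rfl fun i _ => AlgEquiv.pow_apply_eq_mul_prod_pow h i, prod_mul_distrib,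
    prod_const, card_range, prod_pow, mul_pow]

end Algebra

namespace FractionalIdeal

section count

variable {R K : Type*} [CommRing R] [IsDedekindDomain R] [Field K] [Algebra R K]
  [IsFractionRing R K]

theorem count_spanSingleton (v : HeightOneSpectrum R) (x : K) :
    count K v (spanSingleton R⁰ x) = -log (v.valuation K x) := by
  rcases eq_or_ne x 0 with rfl | hx
  · simp [count_zero]
  obtain ⟨a, d, hd, rfl⟩ := IsFractionRing.div_surjective (A := R) x
  have ha : a ≠ 0 := by rintro rfl; simp at hx
  rw [count_well_defined K v (spanSingleton_ne_zero_iff.mpr hx) (a := d) (J := Ideal.span {a}),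
    map_div₀, HeightOneSpectrum.valuation_of_algebraMap, HeightOneSpectrum.valuation_of_algebraMap,
    v.intValuation_if_neg ha, v.intValuation_if_neg (nonZeroDivisors.ne_zero hd), ← exp_sub,
    log_exp]
  · ring
  · rw [coeIdeal_span_singleton, spanSingleton_mul_spanSingleton, div_eq_mul_inv, mul_comm]

theorem exists_eq_pow_of_forall_dvd_count {I : FractionalIdeal R⁰ K} (hI : I ≠ 0) {n : ℕ}
    (h : ∀ v : HeightOneSpectrum R, (n : ℤ) ∣ count K v I) : ∃ J, I = J ^ n := by
  let f (v : HeightOneSpectrum R) : FractionalIdeal R⁰ K := (v.asIdeal : _) ^ (count K v I / n)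
  have hf : Function.HasFiniteMulSupport f :=
    (finite_factors I).subset fun v hv hc => hv (by simp [f, show count K v I = 0 from hc])
  refine ⟨∏ᶠ v, f v, ?_⟩
  conv_lhs => rw [← finprod_heightOneSpectrum_factorization' K hI]
  rw [finprod_pow hf]
  refine finprod_congr fun v => ?_
  rw [← zpow_natCast, ← zpow_mul, Int.ediv_mul_cancel (h v)]

end count

variable {A K : Type*} (L : Type*) {B : Type*}
  [CommRing A] [IsDedekindDomain A] [CommRing B] [IsDedekindDomain B] [Algebra A B]
  [Module.IsTorsionFree A B] [Field K] [Field L] [Algebra K L]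
  [Algebra A K] [IsFractionRing A K] [Algebra A L] [IsScalarTower A K L]
  [Algebra B L] [IsFractionRing B L] [IsScalarTower A B L]

theorem count_spanSingleton_algebraMap (v : HeightOneSpectrum A) (w : HeightOneSpectrum B)
    [w.asIdeal.LiesOver v.asIdeal] (x : K) :
    count L w (spanSingleton B⁰ (algebraMap K L x)) =
      v.asIdeal.ramificationIdx' w.asIdeal * count K v (spanSingleton A⁰ x) := by
  rw [count_spanSingleton, count_spanSingleton, ← HeightOneSpectrum.valuation_liesOver L v w,
    log_pow, nsmul_eq_mul, mul_neg]

end FractionalIdeal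

open NumberField

theorem norm_of_sigma_fixed_mod_nth_powers_is_nth_power_ideal
    (F K : Type) [Field F] [NumberField F] [Field K] [NumberField K]
    [Algebra F K] [IsGalois F K]
    (n : ℕ)
    (σ : K ≃ₐ[F] K)
    (hσgen : ∀ τ : K ≃ₐ[F] K, τ ∈ Subgroup.zpowers σ)
    (hcard : Nat.card (K ≃ₐ[F] K) = n)
    (hunram : ∀ (p : Ideal (𝓞 F)) (P : Ideal (𝓞 K)), p ≠ ⊥ → p.IsPrime → P.IsPrime →
      Ideal.comap (algebraMap (𝓞 F) (𝓞 K)) P = p →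
      Ideal.ramificationIdx' p P = 1)
    (γ : K) (hγ : γ ≠ 0)
    (hfix : ∃ k : K, k ≠ 0 ∧ σ γ / γ = k ^ n) :
    ∃ I : FractionalIdeal (nonZeroDivisors (𝓞 F)) F,
      FractionalIdeal.spanSingleton (nonZeroDivisors (𝓞 F)) (Algebra.norm F γ) = I ^ n := by
  obtain ⟨k, -, hk⟩ := hfix
  have hσγ : σ γ = γ * k ^ Nat.card (K ≃ₐ[F] K) := by rw [hcard, ← hk, mul_div_cancel₀ _ hγ]
  obtain ⟨β, hβ⟩ := Algebra.exists_algebraMap_norm_eq_pow_of_apply_eq_mul_pow hσgen hσγ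
  rw [hcard] at hβ
  refine FractionalIdeal.exists_eq_pow_of_forall_dvd_count
    (FractionalIdeal.spanSingleton_ne_zero_iff.mpr (Algebra.norm_ne_zero_iff.mpr hγ)) fun v => ?_
  obtain ⟨⟨W, _, _⟩⟩ := v.asIdeal.nonempty_primesOver (S := 𝓞 K)
  let w : HeightOneSpectrum (𝓞 K) :=
    ⟨W, inferInstance, Ideal.ne_bot_of_liesOver_of_ne_bot v.ne_bot W⟩
  have he : v.asIdeal.ramificationIdx' w.asIdeal = 1 :=
    hunram _ _ v.ne_bot v.isPrime inferInstance (Ideal.LiesOver.over (P := W)).symm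
  have hcount := FractionalIdeal.count_spanSingleton_algebraMap K v w (Algebra.norm F γ)
  rw [he, hβ, ← FractionalIdeal.spanSingleton_pow, FractionalIdeal.count_pow] at hcount
  exact ⟨_, by simpa using hcount.symm⟩
end

section
/- Let K/F be a Galois extension of number fields whose Galois group G is cyclic of order n with generator σ, and assume every nonzero prime ideal of O_F is unramified in O_K. Suppose γ, γ' ∈ K^× satisfy σ(γ)/γ ∈ (K^×)^n and σ(γ')/γ' ∈ (K^×)^n, and that γ' = γ·f·k^n for some f ∈ F^× and k ∈ K^×. If I and I' are fractional ideals of O_F with Norm_{K/F}(γ)·O_F = I^n and Norm_{K/F}(γ')·O_F = I'^n, then the ideal classes of I and I' in the ideal class group Cl(O_F) are equal, and this common class is n-torsion: [I]^n is the trivial class. -/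
/-!
Since `γ' = γ · f · kⁿ` and `[K : F] = n`, taking norms gives `N(γ') = N(γ) · sⁿ` with
`s = f · N(k) ∈ F^×`. Fractional ideals of a Dedekind domain have unique factorization, so
`n`-th roots are unique and `I' = I · (s)`; hence `[I'] = [I]`. Finally `Iⁿ = (N γ)` is principal.
-/

open NumberField

open IsDedekindDomain in
instance FractionalIdeal.isMulTorsionFree {R K : Type*} [CommRing R] [IsDedekindDomain R]
    [Field K] [Algebra R K] [IsFractionRing R K] :
    IsMulTorsionFree (FractionalIdeal (nonZeroDivisors R) K) :=
  .mk' fun A hA B hB n hn h => by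
    rw [← FractionalIdeal.finprod_heightOneSpectrum_factorization' (K := K) hA,
      ← FractionalIdeal.finprod_heightOneSpectrum_factorization' (K := K) hB]
    refine finprod_congr fun v => congrArg _ ?_
    have hcount := congrArg (FractionalIdeal.count K v) h
    rw [FractionalIdeal.count_pow, FractionalIdeal.count_pow] at hcount
    exact mul_left_cancel₀ (Int.natCast_ne_zero.mpr hn) hcount

theorem Algebra.norm_mul_algebraMap_mul_pow_finrank {R S : Type*} [CommRing R] [Ring S]
    [Algebra R S] [Module.Free R S] (x y : S) (r : R) :
    Algebra.norm R (x * algebraMap R S r * y ^ Module.finrank R S) =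
      Algebra.norm R x * (r * Algebra.norm R y) ^ Module.finrank R S := by
  rw [map_mul, map_mul, map_pow, Algebra.norm_algebraMap, mul_pow, mul_assoc]

namespace ClassGroup

variable {R K : Type*} [CommRing R] [Field K] [Algebra R K] [IsFractionRing R K]

theorem mk_pow_eq_one_of_pow_eq_spanSingleton [IsDomain R] {n : ℕ}
    {I : (FractionalIdeal (nonZeroDivisors R) K)ˣ} {a : K}
    (hI : FractionalIdeal.spanSingleton (nonZeroDivisors R) a = (I : FractionalIdeal _ K) ^ n) :
    ClassGroup.mk K I ^ n = 1 := by
  rw [← map_pow, mk_eq_one_iff, Units.val_pow_eq_pow_val, ← hI,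
    FractionalIdeal.coe_spanSingleton]
  exact ⟨⟨a, rfl⟩⟩

theorem mk_eq_mk_of_pow_eq_spanSingleton_mul_pow [IsDedekindDomain R] {n : ℕ} (hn : n ≠ 0)
    {I J : (FractionalIdeal (nonZeroDivisors R) K)ˣ} {a s : K} (hs : s ≠ 0)
    (hI : FractionalIdeal.spanSingleton (nonZeroDivisors R) a = (I : FractionalIdeal _ K) ^ n)
    (hJ : FractionalIdeal.spanSingleton (nonZeroDivisors R) (a * s ^ n) =
      (J : FractionalIdeal _ K) ^ n) :
    ClassGroup.mk K I = ClassGroup.mk K J := by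
  set S := toPrincipalIdeal R K (Units.mk0 s hs)
  have hJ_eq : J = I * S := by
    ext1
    rw [← pow_left_inj hn, ← hJ, Units.val_mul, coe_toPrincipalIdeal, mul_pow, ← hI,
      FractionalIdeal.spanSingleton_pow, FractionalIdeal.spanSingleton_mul_spanSingleton,
      Units.val_mk0]
  have hS : ClassGroup.mk K S = 1 := by
    rw [mk_eq_one_iff, coe_toPrincipalIdeal, FractionalIdeal.coe_spanSingleton]
    exact ⟨⟨s, rfl⟩⟩
  rw [hJ_eq, map_mul, hS, mul_one]

end ClassGroup

theorem class_of_nth_root_ideal_well_defined_and_torsion_general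
    (F K : Type) [Field F] [NumberField F] [Field K] [NumberField K]
    [Algebra F K] [IsGalois F K]
    (n : ℕ)
    (hcard : Nat.card (K ≃ₐ[F] K) = n)
    (γ γ' : K)
    (hrel : ∃ (f : F) (k : K), f ≠ 0 ∧ k ≠ 0 ∧ γ' = γ * algebraMap F K f * k ^ n)
    (I I' : (FractionalIdeal (nonZeroDivisors (𝓞 F)) F)ˣ)
    (hI : FractionalIdeal.spanSingleton (nonZeroDivisors (𝓞 F)) (Algebra.norm F γ)
      = (I : FractionalIdeal (nonZeroDivisors (𝓞 F)) F) ^ n)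
    (hI' : FractionalIdeal.spanSingleton (nonZeroDivisors (𝓞 F)) (Algebra.norm F γ')
      = (I' : FractionalIdeal (nonZeroDivisors (𝓞 F)) F) ^ n) :
    ClassGroup.mk F I = ClassGroup.mk F I' ∧ (ClassGroup.mk F I) ^ n = 1 := by
  obtain ⟨f, k, hf, hk, rfl⟩ := hrel
  have hn : n ≠ 0 := hcard ▸ Nat.card_pos.ne'
  have hfinrank : Module.finrank F K = n := by rw [← hcard, IsGalois.card_aut_eq_finrank]
  have hs : f * Algebra.norm F k ≠ 0 := mul_ne_zero hf (Algebra.norm_ne_zero_iff.mpr hk)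
  rw [← hfinrank, Algebra.norm_mul_algebraMap_mul_pow_finrank, hfinrank] at hI'
  exact ⟨ClassGroup.mk_eq_mk_of_pow_eq_spanSingleton_mul_pow hn hs hI hI',
    ClassGroup.mk_pow_eq_one_of_pow_eq_spanSingleton hI⟩

theorem class_of_nth_root_ideal_well_defined_and_torsion
    (F K : Type) [Field F] [NumberField F] [Field K] [NumberField K]
    [Algebra F K] [IsGalois F K]
    (n : ℕ)
    (σ : K ≃ₐ[F] K)
    (hσgen : ∀ τ : K ≃ₐ[F] K, τ ∈ Subgroup.zpowers σ)
    (hcard : Nat.card (K ≃ₐ[F] K) = n)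
    (hunram : ∀ (p : Ideal (𝓞 F)) (P : Ideal (𝓞 K)), p ≠ ⊥ → p.IsPrime → P.IsPrime →
      Ideal.comap (algebraMap (𝓞 F) (𝓞 K)) P = p →
      Ideal.ramificationIdx' p P = 1)
    (γ γ' : K) (hγ : γ ≠ 0) (hγ' : γ' ≠ 0)
    (hfix : ∃ k : K, k ≠ 0 ∧ σ γ / γ = k ^ n)
    (hfix' : ∃ k : K, k ≠ 0 ∧ σ γ' / γ' = k ^ n)
    (hrel : ∃ (f : F) (k : K), f ≠ 0 ∧ k ≠ 0 ∧ γ' = γ * algebraMap F K f * k ^ n)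
    (I I' : (FractionalIdeal (nonZeroDivisors (𝓞 F)) F)ˣ)
    (hI : FractionalIdeal.spanSingleton (nonZeroDivisors (𝓞 F)) (Algebra.norm F γ)
      = (I : FractionalIdeal (nonZeroDivisors (𝓞 F)) F) ^ n)
    (hI' : FractionalIdeal.spanSingleton (nonZeroDivisors (𝓞 F)) (Algebra.norm F γ')
      = (I' : FractionalIdeal (nonZeroDivisors (𝓞 F)) F) ^ n) :
    ClassGroup.mk F I = ClassGroup.mk F I' ∧ (ClassGroup.mk F I) ^ n = 1 :=
  class_of_nth_root_ideal_well_defined_and_torsion_general F K n hcard γ γ' hrel I I' hI hI'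
end

section
/- Let n ≥ 1, let F be a number field containing a primitive n-th root of unity ζ, and let K/F be a Galois extension with Galois group cyclic of order n generated by σ. Suppose x ∈ K^× satisfies Norm_{K/F}(x) = ζ and y ∈ K^× satisfies σ(y)/y = x^n. Let β be an element of an algebraic closure of K with β^n = y. Then K(β) is a Galois extension of F of degree n² whose Galois group Gal(K(β)/F) is cyclic (of order n²). -/
/-!
Lift `σ` to an automorphism `φ` of `Ω`. Since `φ(β)ⁿ = σ(y) = (xβ)ⁿ`, we get `φ(β) = ωxβ` for
an `n`-th root of unity `ω ∈ F`; so `φ` preserves `L = K(β)`, and because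
`∏_{j<n} σʲ(x) = N(x) = ζ`, also `φⁿ(β) = ζβ`. Hence `φ|_L` has order `n²`: `n` to act trivially
on `K`, and `n` more to kill the factor `ζ`. On the other hand `[L : F] ≤ [K : F] · n = n²` bounds
`|Aut(L/F)|`, so equality holds throughout: `L/F` is Galois with cyclic group generated by `φ|_L`.
-/

open IntermediateField Function

theorem IsPrimitiveRoot.exists_eq_pow_mul_of_pow_eq_pow {R : Type*} [Field R] {ζ a b : R}
    {n : ℕ} [NeZero n] (hζ : IsPrimitiveRoot ζ n) (hab : a ^ n = b ^ n) :
    ∃ i : ℕ, a = ζ ^ i * b := by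
  rcases eq_or_ne b 0 with rfl | hb
  · rw [zero_pow (NeZero.ne n), pow_eq_zero_iff (NeZero.ne n)] at hab
    exact ⟨0, by rw [hab, mul_zero]⟩
  · have hroot : (a / b) ^ n = 1 := by rw [div_pow, hab, div_self (pow_ne_zero n hb)]
    obtain ⟨i, -, hi⟩ := hζ.eq_pow_of_pow_eq_one hroot
    exact ⟨i, by rw [hi, div_mul_cancel₀ a hb]⟩

theorem prod_eq_prod_range_pow_of_forall_mem_zpowers {G M : Type*} [Group G] [Fintype G]
    [CommMonoid M] {g : G} (hg : ∀ h, h ∈ Subgroup.zpowers g) (f : G → M) :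
    ∏ h, f h = ∏ j ∈ Finset.range (Nat.card G), f (g ^ j) := by
  have hord := orderOf_eq_card_of_forall_mem_zpowers hg
  have hbij : Bijective fun j : Fin (Nat.card G) => g ^ (j : ℕ) := by
    rw [Fintype.bijective_iff_injective_and_card, Fintype.card_fin]
    refine ⟨fun a b hab => Fin.ext ?_, Nat.card_eq_fintype_card⟩
    exact pow_injOn_Iio_orderOf (by rw [hord]; exact a.2) (by rw [hord]; exact b.2) hab
  rw [← Fin.prod_univ_eq_prod_range]
  exact (Fintype.prod_bijective _ hbij _ _ fun _ => rfl).symm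

theorem Algebra.norm_eq_prod_range_pow_of_forall_mem_zpowers {F K : Type*} [Field F] [Field K]
    [Algebra F K] [FiniteDimensional F K] [IsGalois F K] {σ : Gal(K/F)}
    (hσ : ∀ τ, τ ∈ Subgroup.zpowers σ) (x : K) :
    algebraMap F K (Algebra.norm F x) = ∏ j ∈ Finset.range (Nat.card Gal(K/F)), (σ ^ j) x := by
  rw [Algebra.norm_eq_prod_automorphisms]
  exact prod_eq_prod_range_pow_of_forall_mem_zpowers hσ (· x)

theorem AlgEquiv.pow_apply_eq_prod_mul {R A : Type*} [CommSemiring R] [CommSemiring A]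
    [Algebra R A] {g : A ≃ₐ[R] A} {β c : A} (h : g β = c * β) (k : ℕ) :
    (g ^ k) β = (∏ j ∈ Finset.range k, (g ^ j) c) * β := by
  induction k with
  | zero => simp
  | succ k ih =>
    rw [pow_succ', AlgEquiv.mul_apply, ih, map_mul, map_prod, h, Finset.prod_range_succ',
      pow_zero, AlgEquiv.one_apply, mul_assoc]
    simp only [← AlgEquiv.mul_apply, ← pow_succ']

theorem AlgEquiv.pow_apply_algebraMap_of_semiconj {F K Ω : Type*} [CommSemiring F]
    [CommSemiring K] [Semiring Ω] [Algebra F K] [Algebra F Ω] [Algebra K Ω]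
    {σ : K ≃ₐ[F] K} {φ : Ω ≃ₐ[F] Ω} (hφ : Semiconj (algebraMap K Ω) σ φ) (j : ℕ) (a : K) :
    (φ ^ j) (algebraMap K Ω a) = algebraMap K Ω ((σ ^ j) a) := by
  simp only [AlgEquiv.coe_pow]
  exact ((hφ.iterate_right j) a).symm

theorem AlgEquiv.orderOf_le_finrank {F E : Type*} [Field F] [Field E] [Algebra F E]
    [FiniteDimensional F E] (g : Gal(E/F)) : orderOf g ≤ Module.finrank F E :=
  orderOf_le_card.trans (Nat.card_eq_fintype_card (α := Gal(E/F)) ▸ AlgEquiv.card_le)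

theorem isGalois_and_isCyclic_of_finrank_le_orderOf {F E : Type*} [Field F] [Field E]
    [Algebra F E] [FiniteDimensional F E] (g : Gal(E/F)) (h : Module.finrank F E ≤ orderOf g) :
    IsGalois F E ∧ IsCyclic Gal(E/F) := by
  have hcard : Nat.card Gal(E/F) = Module.finrank F E :=
    le_antisymm (Nat.card_eq_fintype_card (α := Gal(E/F)) ▸ AlgEquiv.card_le)
      (h.trans orderOf_le_card)
  exact ⟨.of_card_aut_eq_finrank F E hcard,
    isCyclic_of_orderOf_eq_card g (le_antisymm orderOf_le_card (hcard ▸ h))⟩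

section Tower

variable {F K Ω : Type*} [Field F] [Field K] [Field Ω] [Algebra F K] [Algebra K Ω]
  [Algebra F Ω] [IsScalarTower F K Ω]

theorem IntermediateField.adjoin_range_algebraMap_union (S : Set Ω) :
    adjoin F (Set.range (algebraMap K Ω) ∪ S) = (adjoin K S).restrictScalars F := by
  refine le_antisymm (adjoin_le_iff.2 <| Set.union_subset ?_ (subset_adjoin K S)) ?_
  · exact Set.range_subset_iff.2 (algebraMap_mem _)
  · intro z (hz : z ∈ Subfield.closure (Set.range (algebraMap K Ω) ∪ S))
    exact Subfield.closure_le.2 (subset_adjoin F _) hz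

open Polynomial in
theorem IntermediateField.finrank_adjoin_simple_le_of_pow_eq {n : ℕ} (hn : n ≠ 0) {β : Ω} {y : K}
    (hβ : β ^ n = algebraMap K Ω y) : Module.finrank K K⟮β⟯ ≤ n := by
  have hroot : aeval β (X ^ n - C y) = 0 := by simp [hβ]
  rw [adjoin.finrank ⟨_, monic_X_pow_sub_C y hn, hroot⟩,
    ← natDegree_X_pow_sub_C (n := n) (r := y)]
  exact natDegree_le_natDegree (minpoly.min K β (monic_X_pow_sub_C y hn) hroot)

theorem IntermediateField.finiteDimensional_adjoin_range_algebraMap_union_singleton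
    [FiniteDimensional F K] {n : ℕ} (hn : n ≠ 0) {β : Ω} {y : K}
    (hβ : β ^ n = algebraMap K Ω y) :
    FiniteDimensional F (adjoin F (Set.range (algebraMap K Ω) ∪ {β})) := by
  have : FiniteDimensional K K⟮β⟯ :=
    adjoin.finiteDimensional (.of_pow (Nat.pos_of_ne_zero hn) (hβ ▸ isIntegral_algebraMap))
  rw [adjoin_range_algebraMap_union]
  exact .trans F K K⟮β⟯

theorem IntermediateField.finrank_adjoin_range_algebraMap_union_singleton_le
    {n : ℕ} (hn : n ≠ 0) {β : Ω} {y : K}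
    (hβ : β ^ n = algebraMap K Ω y) :
    Module.finrank F (adjoin F (Set.range (algebraMap K Ω) ∪ {β})) ≤ Module.finrank F K * n := by
  rw [adjoin_range_algebraMap_union]
  calc Module.finrank F (K⟮β⟯.restrictScalars F)
      = Module.finrank F K * Module.finrank K K⟮β⟯ := (Module.finrank_mul_finrank F K K⟮β⟯).symm
    _ ≤ Module.finrank F K * n :=
      Nat.mul_le_mul_left _ (finrank_adjoin_simple_le_of_pow_eq hn hβ)

end Tower

section Restrict

variable {F E : Type*} [Field F] [Field E] [Algebra F E]

theorem IntermediateField.map_adjoin_eq_self {S : Set E} [FiniteDimensional F (adjoin F S)]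
    (g : Gal(E/F)) (h : ∀ z ∈ S, g z ∈ adjoin F S) :
    (adjoin F S).map g.toAlgHom = adjoin F S := by
  have hle : (adjoin F S).map g.toAlgHom ≤ adjoin F S := by
    rw [adjoin_map]
    exact adjoin_le_iff.2 (Set.image_subset_iff.2 h)
  exact eq_of_le_of_finrank_eq hle
    (intermediateFieldMap g (adjoin F S)).toLinearEquiv.finrank_eq.symm

def AlgEquiv.restrictOfMapEq (g : Gal(E/F)) {L : IntermediateField F E}
    (h : L.map g.toAlgHom = L) : Gal(L/F) :=
  (intermediateFieldMap g L).trans (equivOfEq h)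

theorem AlgEquiv.coe_restrictOfMapEq_pow_apply (g : Gal(E/F)) {L : IntermediateField F E}
    (h : L.map g.toAlgHom = L) (k : ℕ) (z : L) :
    ((g.restrictOfMapEq h ^ k) z : E) = (g ^ k) z := by
  induction k with
  | zero => rfl
  | succ k ih => rw [pow_succ', AlgEquiv.mul_apply, pow_succ', AlgEquiv.mul_apply, ← ih]; rfl

theorem AlgEquiv.restrictOfMapEq_pow_eq_one_iff (g : Gal(E/F)) {S : Set E}
    (h : (adjoin F S).map g.toAlgHom = adjoin F S) (k : ℕ) :
    g.restrictOfMapEq h ^ k = 1 ↔ ∀ z ∈ S, (g ^ k) z = z := by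
  constructor
  · intro h1 z hz
    rw [← coe_restrictOfMapEq_pow_apply g h k ⟨z, subset_adjoin F S hz⟩, h1]
    rfl
  · intro h1
    have : (g.restrictOfMapEq h ^ k).toAlgHom = AlgHom.id F _ :=
      adjoin_algHom_ext F fun z hz =>
        Subtype.ext <| (coe_restrictOfMapEq_pow_apply g h k _).trans (h1 z hz)
    exact AlgEquiv.ext (AlgHom.congr_fun this)

end Restrict

section Kummer

variable {F K Ω : Type*} [Field F] [Field K] [Field Ω] [Algebra F K] [Algebra K Ω]
  [Algebra F Ω] {σ : Gal(K/F)} {φ : Gal(Ω/F)} {n : ℕ} {ζ : F} {β : Ω}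

theorem exists_apply_eq_rootOfUnity_mul [NeZero n] (hφ : Semiconj (algebraMap K Ω) σ φ)
    (hζ : IsPrimitiveRoot ζ n) {x y : K} (hxy : σ y = x ^ n * y)
    (hβ : β ^ n = algebraMap K Ω y) :
    ∃ ω : F, ω ^ n = 1 ∧ φ β = algebraMap F Ω ω * (algebraMap K Ω x * β) := by
  have hpow : (φ β) ^ n = (algebraMap K Ω x * β) ^ n := by
    rw [← map_pow, hβ, ← hφ y, hxy, map_mul, map_pow, mul_pow, hβ]
  obtain ⟨i, hi⟩ :=
    (hζ.map_of_injective (algebraMap F Ω).injective).exists_eq_pow_mul_of_pow_eq_pow hpow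
  refine ⟨ζ ^ i, ?_, by rw [map_pow, hi]⟩
  rw [← pow_mul, mul_comm, pow_mul, hζ.pow_eq_one, one_pow]

theorem pow_apply_eq_algebraMap_prod_mul (hφ : Semiconj (algebraMap K Ω) σ φ) {ω : F}
    (hω : ω ^ n = 1) {x : K} (hφβ : φ β = algebraMap F Ω ω * (algebraMap K Ω x * β)) :
    (φ ^ n) β = algebraMap K Ω (∏ j ∈ Finset.range n, (σ ^ j) x) * β := by
  rw [AlgEquiv.pow_apply_eq_prod_mul (hφβ.trans (mul_assoc _ _ _).symm)]
  simp only [map_mul, AlgEquiv.commutes, AlgEquiv.pow_apply_algebraMap_of_semiconj hφ,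
    Finset.prod_mul_distrib, Finset.prod_const, Finset.card_range, ← map_pow, hω, map_one,
    one_mul, map_prod]

theorem forall_pow_apply_eq_self_iff (hφ : Semiconj (algebraMap K Ω) σ φ) (hσ : orderOf σ = n)
    (hζ : IsPrimitiveRoot ζ n) (hφβ : (φ ^ n) β = algebraMap F Ω ζ * β) (hβ : β ≠ 0) (m : ℕ) :
    (∀ z ∈ Set.range (algebraMap K Ω) ∪ {β}, (φ ^ m) z = z) ↔ n * n ∣ m := by
  have hK : (∀ a, (φ ^ m) (algebraMap K Ω a) = algebraMap K Ω a) ↔ n ∣ m := by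
    simp only [AlgEquiv.pow_apply_algebraMap_of_semiconj hφ, (algebraMap K Ω).injective.eq_iff,
      ← hσ, orderOf_dvd_iff_pow_eq_one, AlgEquiv.ext_iff, AlgEquiv.one_apply]
  have hφnk : ∀ k, (φ ^ (n * k)) β = algebraMap F Ω ζ ^ k * β := by
    intro k
    rw [pow_mul, AlgEquiv.pow_apply_eq_prod_mul hφβ]
    simp [AlgEquiv.commutes]
  have hζΩ := hζ.map_of_injective (algebraMap F Ω).injective
  simp only [Set.mem_union, Set.mem_range, Set.mem_singleton_iff, or_imp, forall_and,
    forall_exists_index, forall_apply_eq_imp_iff, forall_eq, hK]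
  constructor
  · rintro ⟨⟨k, rfl⟩, hfix⟩
    rw [hφnk, mul_eq_right₀ hβ, hζΩ.pow_eq_one_iff_dvd] at hfix
    exact mul_dvd_mul_left n hfix
  · rintro ⟨k, rfl⟩
    refine ⟨dvd_mul_of_dvd_left (dvd_mul_right n n) k, ?_⟩
    rw [mul_assoc, hφnk, pow_mul, hζΩ.pow_eq_one, one_pow, one_mul]

theorem map_adjoin_range_algebraMap_union_singleton_eq_self
    (hφ : Semiconj (algebraMap K Ω) σ φ)
    [FiniteDimensional F (adjoin F (Set.range (algebraMap K Ω) ∪ {β}))] {ω : F} {x : K}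
    (hφβ : φ β = algebraMap F Ω ω * (algebraMap K Ω x * β)) :
    (adjoin F (Set.range (algebraMap K Ω) ∪ {β})).map φ.toAlgHom =
      adjoin F (Set.range (algebraMap K Ω) ∪ {β}) := by
  have hK (a : K) : algebraMap K Ω a ∈ adjoin F (Set.range (algebraMap K Ω) ∪ {β}) :=
    subset_adjoin F _ (Or.inl ⟨a, rfl⟩)
  refine map_adjoin_eq_self φ ?_
  rintro _ (⟨a, rfl⟩ | rfl)
  · exact hφ a ▸ hK (σ a)
  · exact hφβ ▸ mul_mem (IntermediateField.algebraMap_mem _ ω)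
      (mul_mem (hK x) (subset_adjoin F _ (Or.inr rfl)))

end Kummer

theorem kummer_generator_gives_cyclic_degree_n_sq_extension_general
    (F K : Type) [Field F] [Field K]
    [Algebra F K] [IsGalois F K]
    (n : ℕ) (hn : 1 ≤ n)
    (ζ : F) (hζ : IsPrimitiveRoot ζ n)
    (σ : K ≃ₐ[F] K)
    (hσgen : ∀ τ : K ≃ₐ[F] K, τ ∈ Subgroup.zpowers σ)
    (hcard : Nat.card (K ≃ₐ[F] K) = n)
    (x : K) (hx : Algebra.norm F x = ζ)
    (y : K) (hy : y ≠ 0) (hxy : σ y / y = x ^ n)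
    (Ω : Type) [Field Ω] [Algebra K Ω] [IsAlgClosure K Ω]
    [Algebra F Ω] [IsScalarTower F K Ω]
    (β : Ω) (hβ : β ^ n = algebraMap K Ω y) :
    IsGalois F (IntermediateField.adjoin F (Set.range (algebraMap K Ω) ∪ {β})) ∧
    Module.finrank F (IntermediateField.adjoin F (Set.range (algebraMap K Ω) ∪ {β})) = n ^ 2 ∧
    IsCyclic ((IntermediateField.adjoin F (Set.range (algebraMap K Ω) ∪ {β})) ≃ₐ[F]
      (IntermediateField.adjoin F (Set.range (algebraMap K Ω) ∪ {β}))) := by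
  have : NeZero n := ⟨by omega⟩
  have : Finite Gal(K/F) := Nat.finite_of_card_ne_zero (by omega)
  have : FiniteDimensional F K := IsGalois.finiteDimensional_of_finite F K
  have : IsAlgClosure F Ω := .ofAlgebraic F K Ω
  have : FiniteDimensional F (adjoin F (Set.range (algebraMap K Ω) ∪ {β})) :=
    finiteDimensional_adjoin_range_algebraMap_union_singleton (NeZero.ne n) hβ
  have hσ : orderOf σ = n := by rw [orderOf_eq_card_of_forall_mem_zpowers hσgen, hcard]
  have hnorm := Algebra.norm_eq_prod_range_pow_of_forall_mem_zpowers hσgen x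
  rw [hcard, hx] at hnorm
  have hβ0 : β ≠ 0 := (pow_ne_zero_iff (NeZero.ne n)).1 (hβ ▸ (map_ne_zero _).2 hy)
  let φ := σ.liftNormal Ω
  have hφ : Semiconj (algebraMap K Ω) σ φ := fun a => (σ.liftNormal_commutes Ω a).symm
  obtain ⟨ω, hω, hφβ⟩ := exists_apply_eq_rootOfUnity_mul hφ hζ ((div_eq_iff hy).1 hxy) hβ
  have hφnβ : (φ ^ n) β = algebraMap F Ω ζ * β := by
    rw [pow_apply_eq_algebraMap_prod_mul hφ hω hφβ, ← hnorm, ← IsScalarTower.algebraMap_apply]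
  let ψ := φ.restrictOfMapEq (map_adjoin_range_algebraMap_union_singleton_eq_self hφ hφβ)
  have hψ_pow (m : ℕ) : ψ ^ m = 1 ↔ n * n ∣ m :=
    (φ.restrictOfMapEq_pow_eq_one_iff _ m).trans
      (forall_pow_apply_eq_self_iff hφ hσ hζ hφnβ hβ0 m)
  have hψ : orderOf ψ = n ^ 2 := sq n ▸ Nat.dvd_antisymm
    (orderOf_dvd_of_pow_eq_one ((hψ_pow _).2 dvd_rfl)) ((hψ_pow _).1 (pow_orderOf_eq_one ψ))
  have hrank : Module.finrank F (adjoin F (Set.range (algebraMap K Ω) ∪ {β})) = n ^ 2 := by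
    refine le_antisymm ?_ (hψ ▸ ψ.orderOf_le_finrank)
    have := finrank_adjoin_range_algebraMap_union_singleton_le (F := F) (NeZero.ne n) hβ
    rwa [← IsGalois.card_aut_eq_finrank F K, hcard, ← sq] at this
  obtain ⟨hgal, hcyc⟩ := isGalois_and_isCyclic_of_finrank_le_orderOf ψ (hrank.trans hψ.symm).le
  exact ⟨hgal, hrank, hcyc⟩

theorem kummer_generator_gives_cyclic_degree_n_sq_extension
    (F K : Type) [Field F] [NumberField F] [Field K] [NumberField K]
    [Algebra F K] [IsGalois F K]
    (n : ℕ) (hn : 1 ≤ n)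
    (ζ : F) (hζ : IsPrimitiveRoot ζ n)
    (σ : K ≃ₐ[F] K)
    (hσgen : ∀ τ : K ≃ₐ[F] K, τ ∈ Subgroup.zpowers σ)
    (hcard : Nat.card (K ≃ₐ[F] K) = n)
    (x : K) (hx0 : x ≠ 0) (hx : Algebra.norm F x = ζ)
    (y : K) (hy : y ≠ 0) (hxy : σ y / y = x ^ n)
    (Ω : Type) [Field Ω] [Algebra K Ω] [IsAlgClosure K Ω]
    [Algebra F Ω] [IsScalarTower F K Ω]
    (β : Ω) (hβ : β ^ n = algebraMap K Ω y) :
    IsGalois F (IntermediateField.adjoin F (Set.range (algebraMap K Ω) ∪ {β})) ∧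
    Module.finrank F (IntermediateField.adjoin F (Set.range (algebraMap K Ω) ∪ {β})) = n ^ 2 ∧
    IsCyclic ((IntermediateField.adjoin F (Set.range (algebraMap K Ω) ∪ {β})) ≃ₐ[F]
      (IntermediateField.adjoin F (Set.range (algebraMap K Ω) ∪ {β}))) :=
  kummer_generator_gives_cyclic_degree_n_sq_extension_general F K n hn ζ hζ σ hσgen hcard x hx y hy
    hxy Ω β hβ
end

section
/- Let p be a prime with p ≡ 1 (mod 4) and let t be a positive squarefree integer coprime to p. Let F = ℚ(√(−pt)) and K = F(√p). Then K/F is a degree 2 extension in which every nonzero prime ideal of O_F is unramified in O_K (and every infinite place of F is complex, so K/F is everywhere unramified). -/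
/-!
Since `p ≡ 1 (mod 4)`, `θ = (1 + √p) / 2` is an algebraic integer with minimal polynomial
`X² - X - (p - 1) / 4` over `𝓞 F`, so the different of `𝓞 K / 𝓞 F` contains `2θ - 1 = √p`.
Likewise `u = √(-pt) / √p` satisfies `u² = -t`, so the different contains `2u`. As `p` and `4t`
are coprime, `1 = A p + 4 B t = A (√p)² - B (2u)²` lies in the different, which is therefore the
unit ideal; but a prime `P` with `P² ∣ q 𝓞_K` would divide it. That `√p ∉ F` follows from writing
elements of `F` as `a + b √(-pt)`, and `F` is imaginary since `√(-pt)` has a negative square.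
-/

open NumberField Polynomial IntermediateField

attribute [local instance] FractionRing.liftAlgebra

theorem minpoly_eq_of_natDegree_eq_two {R S : Type*} [CommRing R] [IsDomain R]
    [IsIntegrallyClosed R] [CommRing S] [IsDomain S] [Algebra R S] [Module.IsTorsionFree R S]
    {x : S} {g : R[X]} (hg : g.Monic) (hdeg : g.natDegree = 2) (hx : aeval x g = 0)
    (hxR : x ∉ (algebraMap R S).range) : minpoly R x = g :=
  have hint : IsIntegral R x := ⟨g, hg, hx⟩
  (eq_of_monic_of_dvd_of_natDegree_le (minpoly.monic hint) hg
    (minpoly.isIntegrallyClosed_dvd hint hx) (hdeg ▸ (minpoly.two_le_natDegree_iff hint).2 hxR)).symm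

section QuadraticExtension

variable {F E : Type*} [Field F] [Field E] [Algebra F E]

theorem adjoin_simple_eq_top_of_finrank_eq_two (hE : Module.finrank F E = 2) {x : E}
    (hx : x ∉ (algebraMap F E).range) : F⟮x⟯ = ⊤ :=
  have := isSimpleOrder_of_finrank_prime F E (hE ▸ Nat.prime_two)
  (eq_bot_or_eq_top F⟮x⟯).resolve_left (mt adjoin_simple_eq_bot_iff.1 hx)

theorem finrank_eq_two_of_sq_eq {r : E} {c : F} (hr : r ^ 2 = algebraMap F E c)
    (hrF : r ∉ (algebraMap F E).range) (hgen : F⟮r⟯ = ⊤) : Module.finrank F E = 2 := by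
  have hroot : aeval r (X ^ 2 - C c) = 0 := by simp [hr]
  have hmin := minpoly_eq_of_natDegree_eq_two (monic_X_pow_sub_C c two_ne_zero)
    (natDegree_X_pow_sub_C) hroot hrF
  rw [← finrank_top', ← hgen, adjoin.finrank ⟨_, monic_X_pow_sub_C c two_ne_zero, hroot⟩, hmin,
    natDegree_X_pow_sub_C]

theorem exists_eq_algebraMap_add_algebraMap_mul {s : E} {c : F}
    (hs : s ^ 2 = algebraMap F E c) (hgen : F⟮s⟯ = ⊤) (y : E) :
    ∃ a b : F, y = algebraMap F E a + algebraMap F E b * s := by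
  have hint : IsIntegral F s := ⟨X ^ 2 - C c, monic_X_pow_sub_C c two_ne_zero, by simp [hs]⟩
  have hy : y ∈ Algebra.adjoin F {s} := by
    rw [(adjoin_simple_eq_top_iff_of_isAlgebraic hint.isAlgebraic).1 hgen]
    exact Algebra.mem_top
  induction hy using Algebra.adjoin_induction with
  | mem x hx => exact ⟨0, 1, by simp [Set.mem_singleton_iff.1 hx]⟩
  | algebraMap a => exact ⟨a, 0, by simp⟩
  | add x y _ _ hx hy =>
    obtain ⟨a, b, rfl⟩ := hx
    obtain ⟨a', b', rfl⟩ := hy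
    exact ⟨a + a', b + b', by simp only [map_add]; ring⟩
  | mul x y _ _ hx hy =>
    obtain ⟨a, b, rfl⟩ := hx
    obtain ⟨a', b', rfl⟩ := hy
    refine ⟨a * a' + b * b' * c, a * b' + b * a', ?_⟩
    simp only [map_add, map_mul, ← hs]
    ring

theorem eq_zero_of_algebraMap_add_algebraMap_mul_eq_zero {s : E}
    (hs : s ∉ (algebraMap F E).range) {a b : F}
    (h : algebraMap F E a + algebraMap F E b * s = 0) : a = 0 ∧ b = 0 := by
  obtain rfl | hb := eq_or_ne b 0
  · simpa using h
  refine absurd ⟨-a / b, ?_⟩ hs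
  rw [map_div₀, map_neg, div_eq_iff (by simpa using hb)]
  linear_combination -h

theorem algebraMap_div_notMem_range {a : F} (ha : a ≠ 0) {r : E}
    (hr : r ∉ (algebraMap F E).range) : algebraMap F E a / r ∉ (algebraMap F E).range := by
  rintro ⟨y, hy⟩
  exact hr ⟨a / y, by rw [map_div₀, hy, div_div_cancel₀ (by simpa using ha)]⟩

end QuadraticExtension

theorem ne_sq_of_sq_eq_neg {E : Type*} [Field E] [CharZero E] {c d : ℚ} (hc : ¬IsSquare c)
    (hc0 : 0 < c) (hd : 0 < d) {s : E} (hs : s ^ 2 = -(d : E)) (hgen : ℚ⟮s⟯ = ⊤) (y : E) :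
    y ^ 2 ≠ c := by
  intro hy
  have hsQ : s ∉ (algebraMap ℚ E).range := by
    rintro ⟨a, rfl⟩
    have : a ^ 2 = -d := by exact_mod_cast (show (a : E) ^ 2 = -(d : E) by simpa using hs)
    nlinarith [sq_nonneg a]
  obtain ⟨a, b, rfl⟩ := exists_eq_algebraMap_add_algebraMap_mul (c := -d) (by simpa using hs) hgen y
  have key : algebraMap ℚ E (a ^ 2 - d * b ^ 2 - c) + algebraMap ℚ E (2 * a * b) * s = 0 := by
    simp only [map_sub, map_mul, map_pow, map_ofNat, eq_ratCast] at hy ⊢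
    linear_combination hy - (b : E) ^ 2 * hs
  obtain ⟨hre, him⟩ := eq_zero_of_algebraMap_add_algebraMap_mul_eq_zero hsQ key
  rcases mul_eq_zero.1 (show a * b = 0 by linarith) with rfl | rfl
  · nlinarith [sq_nonneg b]
  · exact hc ⟨a, by linear_combination -hre⟩

theorem NumberField.InfinitePlace.isComplex_of_sq_eq_neg {F : Type*} [Field F] {d : ℚ}
    (hd : 0 < d) {s : F} (hs : s ^ 2 = -(d : F)) (w : InfinitePlace F) : w.IsComplex := by
  rw [← not_isReal_iff_isComplex]
  intro hw
  have := congrArg (embedding_of_isReal hw) hs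
  simp only [map_pow, map_neg, map_ratCast] at this
  nlinarith [sq_nonneg (embedding_of_isReal hw s), (Rat.cast_pos (K := ℝ)).2 hd]

theorem Ideal.ramificationIdx'_eq_one_of_differentIdeal_eq_top {A B : Type*} [CommRing A]
    [CommRing B] [Algebra A B] [IsDedekindDomain A] [IsDedekindDomain B]
    [Module.IsTorsionFree A B] [Module.Finite A B]
    [Algebra.IsSeparable (FractionRing A) (FractionRing B)]
    (hD : differentIdeal A B = ⊤) {P : Ideal B} [P.IsPrime]
    (hP : P.comap (algebraMap A B) ≠ ⊥) : (P.comap (algebraMap A B)).ramificationIdx' P = 1 := by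
  have : (P.comap (algebraMap A B)).IsMaximal := (Ideal.IsPrime.comap _).isMaximal hP
  by_contra he
  have hP2 := (ramificationIdx'_ne_one_iff map_comap_le).1 he
  have hdvd := pow_sub_one_dvd_differentIdeal A P 2 hP (dvd_iff_le.2 hP2)
  rw [hD, pow_one] at hdvd
  exact IsPrime.ne_top ‹_› (top_le_iff.1 (le_of_dvd hdvd))

section Different

variable {F K : Type*} [Field F] [NumberField F] [Field K] [NumberField K] [Algebra F K]

theorem two_mul_sub_mem_differentIdeal (hK : Module.finrank F K = 2) {x : 𝓞 K} {a b : 𝓞 F}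
    (hx : x ^ 2 = algebraMap (𝓞 F) (𝓞 K) a * x + algebraMap (𝓞 F) (𝓞 K) b)
    (hxF : (x : K) ∉ (algebraMap F K).range) :
    2 * x - algebraMap (𝓞 F) (𝓞 K) a ∈ differentIdeal (𝓞 F) (𝓞 K) := by
  have hxR : x ∉ (algebraMap (𝓞 F) (𝓞 K)).range := by
    rintro ⟨y, rfl⟩
    exact hxF ⟨y, by simp [← IsScalarTower.algebraMap_apply]⟩
  have hg : (X ^ 2 - C a * X - C b).Monic := by monicity!
  have hmin := minpoly_eq_of_natDegree_eq_two hg (by compute_degree!)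
    (by simp [hx]) hxR
  have hgen : Algebra.adjoin F {algebraMap (𝓞 K) K x} = ⊤ :=
    adjoin_eq_top_iff.1 (adjoin_simple_eq_top_of_finrank_eq_two hK hxF)
  simpa [hmin, one_add_one_eq_two, map_ofNat] using
    aeval_derivative_mem_differentIdeal (𝓞 F) F K x hgen

theorem mem_differentIdeal_of_sq_eq_of_mod_four (hK : Module.finrank F K = 2) {p : ℕ}
    (hp4 : p % 4 = 1) {r : 𝓞 K} (hr : (r : K) ^ 2 = p) (hrF : (r : K) ∉ (algebraMap F K).range) :
    r ∈ differentIdeal (𝓞 F) (𝓞 K) := by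
  obtain ⟨k, rfl⟩ : ∃ k, p = 4 * k + 1 := ⟨p / 4, by omega⟩
  have hθ : ((1 + r) / 2 : K) ^ 2 = 1 * ((1 + r) / 2) + k := by
    push_cast at hr
    linear_combination hr / 4
  obtain ⟨θ, hθ_coe⟩ : ∃ θ : 𝓞 K, (θ : K) = (1 + r) / 2 := by
    refine ⟨⟨(1 + r) / 2, X ^ 2 - X - C (k : ℤ), by monicity!, ?_⟩, rfl⟩
    rw [← aeval_def]
    simp only [map_sub, map_pow, aeval_X, map_natCast]
    linear_combination hθ
  have hθF : (θ : K) ∉ (algebraMap F K).range := by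
    rintro ⟨y, hy⟩
    exact hrF ⟨2 * y - 1, by rw [map_sub, map_mul, hy, hθ_coe, map_ofNat, map_one]; ring⟩
  convert two_mul_sub_mem_differentIdeal hK (a := 1) (b := k)
    (RingOfIntegers.ext (by simpa [hθ_coe] using hθ)) hθF using 1
  ext
  simp only [map_sub, map_mul, map_ofNat, map_one, hθ_coe]
  ring

theorem differentIdeal_eq_top_of_sq_eq (hK : Module.finrank F K = 2) {p t : ℕ}
    (hp4 : p % 4 = 1) (hpt : p.Coprime t) {r u : K} (hr : r ^ 2 = p) (hu : u ^ 2 = -t)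
    (hrF : r ∉ (algebraMap F K).range) (huF : u ∉ (algebraMap F K).range) :
    differentIdeal (𝓞 F) (𝓞 K) = ⊤ := by
  obtain ⟨ρ, rfl⟩ : ∃ ρ : 𝓞 K, (ρ : K) = r :=
    ⟨⟨r, IsIntegral.of_pow two_pos (hr ▸ isIntegral_natCast p)⟩, rfl⟩
  obtain ⟨ω, rfl⟩ : ∃ ω : 𝓞 K, (ω : K) = u :=
    ⟨⟨u, IsIntegral.of_pow two_pos (hu ▸ (isIntegral_natCast t).neg)⟩, rfl⟩
  have hρ : ρ ∈ differentIdeal (𝓞 F) (𝓞 K) :=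
    mem_differentIdeal_of_sq_eq_of_mod_four hK hp4 hr hrF
  have hω : 2 * ω ∈ differentIdeal (𝓞 F) (𝓞 K) := by
    simpa using two_mul_sub_mem_differentIdeal hK (a := 0) (b := -t)
      (RingOfIntegers.ext (by simpa using hu)) huF
  have h4 : Nat.Coprime p 4 := by rw [Nat.Coprime, Nat.gcd_comm, Nat.gcd_rec, hp4]; rfl
  obtain ⟨A, B, hAB⟩ := Nat.isCoprime_iff_coprime.2 (h4.mul_right hpt)
  have hABK : (A : K) * p + B * (4 * t) = 1 := by exact_mod_cast congrArg ((↑) : ℤ → K) hAB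
  have hone : (1 : 𝓞 K) = A * ρ * ρ - B * (2 * ω) * (2 * ω) := RingOfIntegers.ext <| by
    simp only [map_one, map_sub, map_mul, map_intCast, map_ofNat]
    linear_combination -A * hr + 4 * B * hu - hABK
  rw [Ideal.eq_top_iff_one, hone]
  exact sub_mem (Ideal.mul_mem_left _ _ hρ) (Ideal.mul_mem_left _ _ hω)

end Different

theorem sqrt_p_everywhere_unramified_over_Q_sqrt_neg_pt_general
    (p t : ℕ) (hp : p.Prime) (hp4 : p % 4 = 1)
    (ht0 : 0 < t) (hcop : Nat.Coprime t p)
    (F : Type) [Field F] [NumberField F]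
    (s : F) (hs : s ^ 2 = -((p : F) * (t : F)))
    (hFgen : IntermediateField.adjoin ℚ {s} = (⊤ : IntermediateField ℚ F))
    (K : Type) [Field K] [NumberField K] [Algebra F K]
    (r : K) (hr : r ^ 2 = (p : K))
    (hKgen : IntermediateField.adjoin F {r} = (⊤ : IntermediateField F K)) :
    Module.finrank F K = 2 ∧
    (∀ (q : Ideal (𝓞 F)) (P : Ideal (𝓞 K)), q ≠ ⊥ → q.IsPrime → P.IsPrime →
      Ideal.comap (algebraMap (𝓞 F) (𝓞 K)) P = q →
      Ideal.ramificationIdx' q P = 1) ∧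
    (∀ w : InfinitePlace F, w.IsComplex) := by
  have hpt : (0 : ℚ) < p * t := by have := hp.pos; positivity
  have hs' : s ^ 2 = -((p * t : ℚ) : F) := by push_cast; exact hs
  have hrF : r ∉ (algebraMap F K).range := by
    rintro ⟨y, rfl⟩
    refine ne_sq_of_sq_eq_neg (c := p) ?_ (by exact_mod_cast hp.pos) hpt hs' hFgen y
      ((algebraMap F K).injective (by simpa using hr))
    rw [Rat.isSquare_natCast_iff]
    exact hp.prime.not_isSquare
  have hK := finrank_eq_two_of_sq_eq (c := (p : F)) (by simpa using hr) hrF hKgen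
  have hu : (algebraMap F K s / r) ^ 2 = -t := by
    have hp0 : (p : K) ≠ 0 := Nat.cast_ne_zero.2 hp.ne_zero
    rw [div_pow, hr, ← map_pow, hs]
    push_cast
    field_simp
  have hs0 : s ≠ 0 := ne_zero_pow two_ne_zero (by simpa [hs'] using hpt.ne')
  have hD := differentIdeal_eq_top_of_sq_eq hK hp4 hcop.symm hr hu hrF
    (algebraMap_div_notMem_range hs0 hrF)
  refine ⟨hK, fun q P hq _ _ hPq => ?_, InfinitePlace.isComplex_of_sq_eq_neg hpt hs'⟩
  subst hPq
  exact Ideal.ramificationIdx'_eq_one_of_differentIdeal_eq_top hD hq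

theorem sqrt_p_everywhere_unramified_over_Q_sqrt_neg_pt
    (p t : ℕ) (hp : p.Prime) (hp4 : p % 4 = 1)
    (ht : Squarefree t) (ht0 : 0 < t) (hcop : Nat.Coprime t p)
    (F : Type) [Field F] [NumberField F]
    (s : F) (hs : s ^ 2 = -((p : F) * (t : F)))
    (hFgen : IntermediateField.adjoin ℚ {s} = (⊤ : IntermediateField ℚ F))
    (K : Type) [Field K] [NumberField K] [Algebra F K]
    (r : K) (hr : r ^ 2 = (p : K))
    (hKgen : IntermediateField.adjoin F {r} = (⊤ : IntermediateField F K)) :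
    Module.finrank F K = 2 ∧
    (∀ (q : Ideal (𝓞 F)) (P : Ideal (𝓞 K)), q ≠ ⊥ → q.IsPrime → P.IsPrime →
      Ideal.comap (algebraMap (𝓞 F) (𝓞 K)) P = q →
      Ideal.ramificationIdx' q P = 1) ∧
    (∀ w : InfinitePlace F, w.IsComplex) :=
  sqrt_p_everywhere_unramified_over_Q_sqrt_neg_pt_general p t hp hp4 ht0 hcop F s hs hFgen K r hr
    hKgen
end

section
/- Let n > 1, let F be a number field containing a primitive n-th root of unity ζ_n, and let a ∈ F^×. Let α be a root of X^n − a in an algebraic closure of F, set K = F(α), and suppose K/F is everywhere unramified (every nonzero prime ideal of O_F is unramified in O_K and every infinite place of F is unramified in K), so that K/F is cyclic of some degree m dividing n. Let σ be the generator of Gal(K/F) with σ(α)/α = ζ_n^{n/m}. Let b be a unit of O_F, let x ∈ K^× satisfy Norm_{K/F}(x) = b, and let ν ∈ K^× satisfy x^m/b = σ(ν)/ν. Then there exists a fractional ideal I of O_F with Norm_{K/F}(ν·α)·O_F = I^m. -/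
/-!
Put `y = ν α`. The hypotheses give `σ y = y · x ^ m · ε` with `ε = ζ ^ (n / m) / b` a unit of
`𝓞 F`, hence `σ ^ i y = y · (∏_{j < i} σ ^ j x) ^ m · ε ^ i`, and multiplying over `i < m` shows
that `N(y) = ε ^ (m choose 2) · z ^ m` for some `z ∈ K`. So `N(y) 𝓞_K = (z 𝓞_K) ^ m`. As `K / F`
is unramified at every finite prime, `v_𝔓(c 𝓞_K) = v_𝔭(c)` for `c ∈ F` and `𝔓 ∣ 𝔭`; hence every
valuation of `N(y)` is divisible by `m`, and `N(y) 𝓞_F` is an `m`-th power.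
-/

open NumberField Finset
open scoped nonZeroDivisors

theorem AlgEquiv.pow_apply_eq_mul_prod {R A : Type*} [CommSemiring R] [CommSemiring A]
    [Algebra R A] (σ : A ≃ₐ[R] A) {y w : A} (h : σ y = y * w) (i : ℕ) :
    (σ ^ i) y = y * ∏ j ∈ range i, (σ ^ j) w := by
  induction i with
  | zero => simp
  | succ i ih => rw [pow_succ, AlgEquiv.mul_apply, h, map_mul, ih, prod_range_succ, mul_assoc]

section CyclicNorm

variable {F K : Type*} [Field F] [Field K] [Algebra F K] [FiniteDimensional F K] [IsGalois F K]
  {σ : K ≃ₐ[F] K}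

theorem Algebra.algebraMap_norm_eq_prod_range_pow_s16 (hσ : ∀ τ, τ ∈ Subgroup.zpowers σ) (y : K) :
    algebraMap F K (Algebra.norm F y) = ∏ i ∈ range (Module.finrank F K), (σ ^ i) y := by
  classical
  have horder : orderOf σ = Module.finrank F K := by
    rw [orderOf_eq_card_of_forall_mem_zpowers hσ, IsGalois.card_aut_eq_finrank]
  rw [Algebra.norm_eq_prod_automorphisms, ← IsCyclic.image_range_orderOf hσ,
    prod_image fun i hi j hj => pow_injOn_Iio_orderOf (by simpa using hi) (by simpa using hj),
    horder]

theorem Algebra.exists_algebraMap_norm_eq_mul_pow (hσ : ∀ τ, τ ∈ Subgroup.zpowers σ) {y x : K}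
    {u : F} (h : σ y = y * x ^ Module.finrank F K * algebraMap F K u) :
    ∃ z : K, algebraMap F K (Algebra.norm F y) =
      algebraMap F K (u ^ (Module.finrank F K).choose 2) * z ^ Module.finrank F K := by
  set m := Module.finrank F K
  have hpow : ∀ i, (σ ^ i) y = y * (∏ j ∈ range i, (σ ^ j) x) ^ m * algebraMap F K u ^ i := by
    intro i
    rw [σ.pow_apply_eq_mul_prod (h.trans (mul_assoc _ _ _)) i]
    simp only [map_mul, map_pow, AlgEquiv.commutes, prod_mul_distrib, prod_pow, prod_const,
      card_range, mul_assoc]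
  refine ⟨y * ∏ i ∈ range m, ∏ j ∈ range i, (σ ^ j) x, ?_⟩
  rw [algebraMap_norm_eq_prod_range_pow_s16 hσ, prod_congr rfl fun i _ => hpow i, prod_mul_distrib,
    prod_mul_distrib, prod_const, card_range, prod_pow, prod_pow_eq_pow_sum, sum_range_id,
    ← Nat.choose_two_right, map_pow]
  ring

end CyclicNorm

section Count

open UniqueFactorizationMonoid IsDedekindDomain

variable {R S : Type*} [CommRing R] [CommRing S] [IsDedekindDomain R] [IsDedekindDomain S]
  [Algebra R S] [FaithfulSMul R S] {P : Ideal S} [P.IsPrime]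

theorem Ideal.count_normalizedFactors_map_of_prime (hP : P ≠ ⊥) {q : Ideal R} (hq : Prime q) :
    (normalizedFactors (q.map (algebraMap R S))).count P =
      (P.comap (algebraMap R S)).ramificationIdx' P *
        (normalizedFactors q).count (P.comap (algebraMap R S)) := by
  have hq' : q.map (algebraMap R S) ≠ ⊥ := Ideal.map_ne_bot_of_ne_bot hq.ne_zero
  rw [normalizedFactors_irreducible hq.irreducible, normalize_eq, Multiset.count_singleton]
  split_ifs with hPq
  · rw [hPq, mul_one, IsDedekindDomain.ramificationIdx'_eq_normalizedFactors_count hq' ‹_› hP]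
  · rw [mul_zero, Multiset.count_eq_zero]
    intro hmem
    have hle : q ≤ P.comap (algebraMap R S) :=
      Ideal.map_le_iff_le_comap.mp (Ideal.le_of_dvd (dvd_of_mem_normalizedFactors hmem))
    have hqmax : q.IsMaximal := (Ideal.isPrime_of_prime hq).isMaximal hq.ne_zero
    exact hPq (hqmax.eq_of_le (Ideal.comap_ne_top _ (Ideal.IsPrime.ne_top ‹_›)) hle).symm

theorem Ideal.count_normalizedFactors_map (hP : P ≠ ⊥) {J : Ideal R} (hJ : J ≠ ⊥) :
    (normalizedFactors (J.map (algebraMap R S))).count P =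
      (P.comap (algebraMap R S)).ramificationIdx' P *
        (normalizedFactors J).count (P.comap (algebraMap R S)) := by
  induction J using induction_on_prime with
  | h₁ => exact absurd rfl hJ
  | h₂ J hJu =>
    obtain rfl := Ideal.isUnit_iff.mp hJu
    rw [Ideal.map_top]
    simp [← Ideal.one_eq_top]
  | h₃ J q hJ0 hq ih =>
    have hq' : q.map (algebraMap R S) ≠ ⊥ := Ideal.map_ne_bot_of_ne_bot hq.ne_zero
    have hJ' : J.map (algebraMap R S) ≠ ⊥ := Ideal.map_ne_bot_of_ne_bot hJ0
    rw [Ideal.map_mul, normalizedFactors_mul hq' hJ', normalizedFactors_mul hq.ne_zero hJ0,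
      Multiset.count_add, Multiset.count_add, ih hJ0, count_normalizedFactors_map_of_prime hP hq,
      mul_add]

end Count

namespace FractionalIdeal

theorem spanSingleton_algebraMap_unit_mul {R S K L : Type*} [CommRing R]
    [CommRing S] [Algebra R S] [Field K] [Field L] [Algebra R K] [Algebra S L]
    [IsFractionRing S L] [Algebra K L] [Algebra R L] [IsScalarTower R K L] [IsScalarTower R S L]
    (u : Rˣ) (z : L) :
    spanSingleton S⁰ (algebraMap K L (algebraMap R K u) * z) = spanSingleton S⁰ z := by
  rw [← IsScalarTower.algebraMap_apply, IsScalarTower.algebraMap_apply R S L,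
    ← spanSingleton_mul_spanSingleton, ← coeIdeal_span_singleton,
    Ideal.span_singleton_eq_top.mpr (u.isUnit.map _), coeIdeal_top, one_mul]

open UniqueFactorizationMonoid IsDedekindDomain

variable {R : Type*} [CommRing R] [IsDedekindDomain R] (K : Type*) [Field K] [Algebra R K]
  [IsFractionRing R K]

theorem count_coeIdeal_eq_count_normalizedFactors (v : HeightOneSpectrum R) {J : Ideal R}
    (hJ : J ≠ ⊥) : count K v J = (normalizedFactors J).count v.asIdeal := by
  rw [count_coe K v hJ, Nat.cast_inj]
  exact pow_injective_of_not_isUnit (mt Ideal.isUnit_iff.mp v.isPrime.ne_top) v.ne_bot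
    (v.maxPowDividing_eq_pow_multiset_count hJ)

theorem count_spanSingleton_algebraMap_div (v : HeightOneSpectrum R) {r s : R} (hr : r ≠ 0)
    (hs : s ≠ 0) :
    count K v (spanSingleton R⁰ (algebraMap R K r / algebraMap R K s)) =
      (normalizedFactors (Ideal.span {r})).count v.asIdeal -
        ((normalizedFactors (Ideal.span {s})).count v.asIdeal : ℤ) := by
  have hspan : ∀ {t : R}, t ≠ 0 → Ideal.span {t} ≠ ⊥ := fun ht => by simpa using ht
  rw [div_eq_mul_inv, ← spanSingleton_mul_spanSingleton, ← spanSingleton_inv,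
    ← coeIdeal_span_singleton, ← coeIdeal_span_singleton,
    count_mul K v (coeIdeal_ne_zero.mpr (hspan hr))
      (inv_ne_zero (coeIdeal_ne_zero.mpr (hspan hs))), count_inv,
    count_coeIdeal_eq_count_normalizedFactors K v (hspan hr),
    count_coeIdeal_eq_count_normalizedFactors K v (hspan hs), sub_eq_add_neg]

theorem exists_eq_pow_of_dvd_count {I : FractionalIdeal R⁰ K} (hI : I ≠ 0) {m : ℕ}
    (h : ∀ v : HeightOneSpectrum R, (m : ℤ) ∣ count K v I) : ∃ J, I = J ^ m := by
  refine ⟨∏ᶠ v : HeightOneSpectrum R, (v.asIdeal : FractionalIdeal R⁰ K) ^ (count K v I / m), ?_⟩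
  rw [finprod_pow]
  · conv_lhs => rw [← finprod_heightOneSpectrum_factorization' K hI]
    refine finprod_congr fun v => ?_
    rw [← zpow_natCast, ← zpow_mul, Int.ediv_mul_cancel (h v)]
  · refine (finite_factors I).subset fun v hv => ?_
    contrapose! hv
    rw [Function.notMem_mulSupport, Set.notMem_compl_iff.mp hv, Int.zero_ediv, zpow_zero]

variable {S : Type*} [CommRing S] [IsDedekindDomain S] [Algebra R S] [FaithfulSMul R S]
  (L : Type*) [Field L] [Algebra S L] [IsFractionRing S L] [Algebra K L] [Algebra R L]
  [IsScalarTower R K L] [IsScalarTower R S L]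

theorem count_spanSingleton_algebraMap_s16 (v : HeightOneSpectrum R) (w : HeightOneSpectrum S)
    (hwv : w.asIdeal.comap (algebraMap R S) = v.asIdeal) {c : K} (hc : c ≠ 0) :
    count L w (spanSingleton S⁰ (algebraMap K L c)) =
      v.asIdeal.ramificationIdx' w.asIdeal * count K v (spanSingleton R⁰ c) := by
  obtain ⟨r, s, hs, rfl⟩ := IsFractionRing.div_surjective (A := R) c
  have hs0 : s ≠ 0 := nonZeroDivisors.ne_zero hs
  have hr0 : r ≠ 0 := by rintro rfl; simp at hc
  have hinj := FaithfulSMul.algebraMap_injective R S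
  have hmap : ∀ t : R, algebraMap K L (algebraMap R K t) = algebraMap S L (algebraMap R S t) :=
    fun t => by rw [← IsScalarTower.algebraMap_apply, ← IsScalarTower.algebraMap_apply]
  rw [map_div₀, hmap, hmap,
    count_spanSingleton_algebraMap_div L w ((map_ne_zero_iff _ hinj).mpr hr0)
      ((map_ne_zero_iff _ hinj).mpr hs0),
    count_spanSingleton_algebraMap_div K v hr0 hs0, ← Set.image_singleton, ← Ideal.map_span,
    ← Set.image_singleton, ← Ideal.map_span,
    Ideal.count_normalizedFactors_map w.ne_bot (by simpa using hr0),
    Ideal.count_normalizedFactors_map w.ne_bot (by simpa using hs0), hwv]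
  push_cast
  ring

theorem exists_spanSingleton_eq_pow_of_ramificationIdx'_eq_one [Algebra.IsIntegral R S]
    (hunram : ∀ (p : Ideal R) (P : Ideal S), p ≠ ⊥ → p.IsPrime → P.IsPrime →
      P.comap (algebraMap R S) = p → p.ramificationIdx' P = 1)
    {c : K} (hc : c ≠ 0) {m : ℕ} {J : FractionalIdeal S⁰ L}
    (hJ : spanSingleton S⁰ (algebraMap K L c) = J ^ m) :
    ∃ I : FractionalIdeal R⁰ K, spanSingleton R⁰ c = I ^ m := by
  refine exists_eq_pow_of_dvd_count K (spanSingleton_ne_zero_iff.mpr hc) fun v => ?_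
  have hinj := FaithfulSMul.algebraMap_injective R S
  obtain ⟨P, hP, hPv⟩ := Ideal.exists_ideal_over_maximal_of_isIntegral (S := S) v.asIdeal
    (P_max := v.isMaximal) ((RingHom.injective_iff_ker_eq_bot _).mp hinj ▸ bot_le)
  have hP0 : P ≠ ⊥ := by
    rintro rfl
    exact v.ne_bot (hPv.symm.trans (Ideal.comap_bot_of_injective _ hinj))
  have hcount := count_spanSingleton_algebraMap_s16 K L v ⟨P, hP.isPrime, hP0⟩ hPv hc
  rw [hunram _ _ v.ne_bot v.isPrime hP.isPrime hPv, hJ, count_pow] at hcount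
  exact ⟨_, by simpa using hcount.symm⟩

end FractionalIdeal

theorem norm_of_nu_alpha_is_mth_power_ideal_general
    (n : ℕ) (hn : 1 < n)
    (F : Type) [Field F] [NumberField F]
    (ζ : F) (hζ : IsPrimitiveRoot ζ n)
    (a : F) (ha : a ≠ 0)
    (K : Type) [Field K] [NumberField K] [Algebra F K] [IsGalois F K]
    (α : K) (hαa : α ^ n = algebraMap F K a)
    (hunram_fin : ∀ (p : Ideal (𝓞 F)) (P : Ideal (𝓞 K)), p ≠ ⊥ → p.IsPrime → P.IsPrime →
      Ideal.comap (algebraMap (𝓞 F) (𝓞 K)) P = p →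
      Ideal.ramificationIdx' p P = 1)
    (m : ℕ) (hm : Module.finrank F K = m)
    (σ : K ≃ₐ[F] K)
    (hσgen : ∀ τ : K ≃ₐ[F] K, τ ∈ Subgroup.zpowers σ)
    (hσα : σ α = algebraMap F K (ζ ^ (n / m)) * α)
    (b : (𝓞 F)ˣ)
    (x : K)
    (ν : K) (hν0 : ν ≠ 0)
    (hν : x ^ m / algebraMap F K (algebraMap (𝓞 F) F b) = σ ν / ν) :
    ∃ I : FractionalIdeal (nonZeroDivisors (𝓞 F)) F,
      FractionalIdeal.spanSingleton (nonZeroDivisors (𝓞 F)) (Algebra.norm F (ν * α))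
        = I ^ m := by
  subst hm
  have hn0 : n ≠ 0 := by omega
  have hα : α ≠ 0 := by
    rintro rfl
    exact ha (by simpa [zero_pow hn0] using hαa.symm)
  let ζ' : (𝓞 F)ˣ := Units.ofPowEqOne ⟨ζ, hζ.isIntegral (by omega)⟩ n
    (by ext; push_cast; exact hζ.pow_eq_one) hn0
  have hσνα : σ (ν * α) = ν * α * x ^ Module.finrank F K *
      algebraMap F K (algebraMap (𝓞 F) F ↑(ζ' ^ (n / Module.finrank F K) * b⁻¹)) := by
    rw [map_mul, hσα, (div_eq_iff hν0).mp hν.symm]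
    have hζ' : algebraMap (𝓞 F) F ζ' = ζ := rfl
    simp only [Units.val_mul, Units.val_pow_eq_pow_val, map_mul, map_pow, map_units_inv,
      map_inv₀, hζ']
    field_simp
  obtain ⟨z, hz⟩ := Algebra.exists_algebraMap_norm_eq_mul_pow hσgen hσνα
  refine FractionalIdeal.exists_spanSingleton_eq_pow_of_ramificationIdx'_eq_one F K hunram_fin
    (Algebra.norm_ne_zero_iff.mpr (mul_ne_zero hν0 hα))
    (J := FractionalIdeal.spanSingleton _ z) ?_
  rw [hz, ← map_pow, ← Units.val_pow_eq_pow_val,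
    FractionalIdeal.spanSingleton_algebraMap_unit_mul, FractionalIdeal.spanSingleton_pow]

theorem norm_of_nu_alpha_is_mth_power_ideal
    (n : ℕ) (hn : 1 < n)
    (F : Type) [Field F] [NumberField F]
    (ζ : F) (hζ : IsPrimitiveRoot ζ n)
    (a : F) (ha : a ≠ 0)
    (K : Type) [Field K] [NumberField K] [Algebra F K] [IsGalois F K]
    (α : K) (hαa : α ^ n = algebraMap F K a)
    (hKgen : IntermediateField.adjoin F {α} = (⊤ : IntermediateField F K))
    (hunram_fin : ∀ (p : Ideal (𝓞 F)) (P : Ideal (𝓞 K)), p ≠ ⊥ → p.IsPrime → P.IsPrime →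
      Ideal.comap (algebraMap (𝓞 F) (𝓞 K)) P = p →
      Ideal.ramificationIdx' p P = 1)
    (hunram_inf : ∀ w : InfinitePlace K, (w.comap (algebraMap F K)).IsReal → w.IsReal)
    (m : ℕ) (hm : Module.finrank F K = m) (hmn : m ∣ n)
    (σ : K ≃ₐ[F] K)
    (hσgen : ∀ τ : K ≃ₐ[F] K, τ ∈ Subgroup.zpowers σ)
    (hσα : σ α = algebraMap F K (ζ ^ (n / m)) * α)
    (b : (𝓞 F)ˣ)
    (x : K) (hx0 : x ≠ 0) (hx : Algebra.norm F x = algebraMap (𝓞 F) F b)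
    (ν : K) (hν0 : ν ≠ 0)
    (hν : x ^ m / algebraMap F K (algebraMap (𝓞 F) F b) = σ ν / ν) :
    ∃ I : FractionalIdeal (nonZeroDivisors (𝓞 F)) F,
      FractionalIdeal.spanSingleton (nonZeroDivisors (𝓞 F)) (Algebra.norm F (ν * α))
        = I ^ m :=
  norm_of_nu_alpha_is_mth_power_ideal_general n hn F ζ hζ a ha K α hαa hunram_fin m hm σ hσgen hσα b
    x ν hν0 hν
end
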